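/- arXiv:1109.1161 — 4 statements merged into one kernel-verified Lean document; each statement's English description precedes it below -/
import Mathlib

section
/- Let R be a ring and let E, F, G be left R-modules, each equipped with an increasing, exhaustive, bounded-below ℤ-filtration by submodules. Let α : E → F and β : F → G be R-linear maps that agree with the filtrations and satisfy β ∘ α = 0. Assume graded exactness: for every k ∈ ℤ and every f ∈ F_k with β(f) ∈ G_{k−1}, there exists e ∈ E_k such that f − α(e) ∈ F_{k−1}. Then the sequence is exact, i.e. ker β = im α, and moreover α is strict, i.e. α(E_k) = α(E) ∩ F_k for every k ∈ ℤ. -/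
/-- **Proposition 5 (Proposition e).**
Let `R` be a ring and `E, F, G` left `R`-modules, each with an increasing,
exhaustive, bounded-below `ℤ`-filtration by submodules.  Let `α : E → F` and
`β : F → G` be `R`-linear maps agreeing with the filtrations with `β ∘ α = 0`.
If the associated graded sequence is exact (elementwise: every `f ∈ F_k` with
`β f ∈ G_{k-1}` differs from some `α e`, `e ∈ E_k`, by an element of `F_{k-1}`),
then `ker β = im α` and `α` is strict: `α (E_k) = α(E) ⊓ F_k` for all `k`. -/
theorem hartogs_ext_prop_e
    (R : Type*) [Ring R]
    (E F G : Type*) [AddCommGroup E] [Module R E]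
    [AddCommGroup F] [Module R F] [AddCommGroup G] [Module R G]
    (FE : ℤ → Submodule R E) (FF : ℤ → Submodule R F) (FG : ℤ → Submodule R G)
    (hE_mono : ∀ k : ℤ, FE k ≤ FE (k + 1))
    (hF_mono : ∀ k : ℤ, FF k ≤ FF (k + 1))
    (hG_mono : ∀ k : ℤ, FG k ≤ FG (k + 1))
    (hE_exh : ∀ x : E, ∃ k : ℤ, x ∈ FE k)
    (hF_exh : ∀ x : F, ∃ k : ℤ, x ∈ FF k)
    (hG_exh : ∀ x : G, ∃ k : ℤ, x ∈ FG k)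
    (hE_bdd : ∃ N : ℤ, ∀ k ≤ N, FE k = ⊥)
    (hF_bdd : ∃ N : ℤ, ∀ k ≤ N, FF k = ⊥)
    (hG_bdd : ∃ N : ℤ, ∀ k ≤ N, FG k = ⊥)
    (α : E →ₗ[R] F) (β : F →ₗ[R] G)
    (hα : ∀ k : ℤ, (FE k).map α ≤ FF k)
    (hβ : ∀ k : ℤ, (FF k).map β ≤ FG k)
    (hβα : β ∘ₗ α = 0)
    (hgr : ∀ k : ℤ, ∀ f ∈ FF k, β f ∈ FG (k - 1) →
      ∃ e ∈ FE k, f - α e ∈ FF (k - 1)) :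
    LinearMap.ker β = LinearMap.range α ∧
      ∀ k : ℤ, (FE k).map α = LinearMap.range α ⊓ FF k := by
  have hβα' : ∀ e : E, β (α e) = 0 := fun e => LinearMap.congr_fun hβα e
  obtain ⟨N, hN⟩ := hF_bdd
  have step : ∀ k : ℤ, N ≤ k → ∀ f ∈ FF k, β f = 0 → ∃ e ∈ FE k, α e = f := by
    intro k hk
    refine Int.le_induction (motive := fun k _ => ∀ f ∈ FF k, β f = 0 → ∃ e ∈ FE k, α e = f) ?_ ?_ k hk
    · intro f hf _
      rw [hN N le_rfl, Submodule.mem_bot] at hf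
      exact ⟨0, zero_mem _, by simp [hf]⟩
    · intro n hn ih f hf hβf
      have hβf' : β f ∈ FG (n + 1 - 1) := by rw [hβf]; exact zero_mem _
      obtain ⟨e, he, hfe⟩ := hgr (n + 1) f hf hβf'
      have hβ2 : β (f - α e) = 0 := by
        rw [map_sub, hβf, hβα' e, sub_zero]
      obtain ⟨e', he', hαe'⟩ := ih (f - α e) (by simpa using hfe) hβ2
      refine ⟨e + e', add_mem he (hE_mono n he'), ?_⟩
      rw [map_add, hαe', add_sub_cancel]
  have key : ∀ k : ℤ, ∀ f ∈ FF k, β f = 0 → ∃ e ∈ FE k, α e = f := by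
    intro k f hf hβf
    rcases le_or_gt k N with h | h
    · rw [hN k h, Submodule.mem_bot] at hf
      exact ⟨0, zero_mem _, by simp [hf]⟩
    · exact step k h.le f hf hβf
  constructor
  · ext f
    constructor
    · intro hf
      obtain ⟨k, hk⟩ := hF_exh f
      obtain ⟨e, _, he⟩ := key k f hk (LinearMap.mem_ker.mp hf)
      exact ⟨e, he⟩
    · rintro ⟨e, rfl⟩
      exact LinearMap.mem_ker.mpr (hβα' e)
  · intro k
    apply le_antisymm
    · refine le_inf ?_ (hα k)
      rintro f ⟨e, _, rfl⟩
      exact ⟨e, rfl⟩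
    · rintro f ⟨⟨e0, rfl⟩, hfk⟩
      obtain ⟨e, he, hαe⟩ := key k (α e0) hfk (hβα' e0)
      exact ⟨e, he, hαe⟩
end

section
/- Let R be a ring and let E, F, G be left R-modules, each equipped with an increasing, exhaustive ℤ-filtration by submodules. Let α : E → F and β : F → G be R-linear maps that agree with the filtrations, satisfy β ∘ α = 0 and ker β = im α, and suppose both α and β are strict. Then the induced graded sequence is exact; elementwise: for every k ∈ ℤ and every f ∈ F_k with β(f) ∈ G_{k−1}, there exists e ∈ E_k such that f − α(e) ∈ F_{k−1}. -/
/-- **Proposition 6 (Proposition gre).**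
Let `R` be a ring and `E, F, G` left `R`-modules with increasing, exhaustive
`ℤ`-filtrations.  Let `α : E → F` and `β : F → G` be `R`-linear maps agreeing
with the filtrations with `β ∘ α = 0` and `ker β = im α`, and suppose both `α`
and `β` are strict.  Then the induced graded sequence is exact; elementwise:
every `f ∈ F_k` with `β f ∈ G_{k-1}` differs from some `α e`, `e ∈ E_k`, by an
element of `F_{k-1}`. -/
theorem hartogs_ext_prop_gre
    (R : Type*) [Ring R]
    (E F G : Type*) [AddCommGroup E] [Module R E]
    [AddCommGroup F] [Module R F] [AddCommGroup G] [Module R G]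
    (FE : ℤ → Submodule R E) (FF : ℤ → Submodule R F) (FG : ℤ → Submodule R G)
    (hE_mono : ∀ k : ℤ, FE k ≤ FE (k + 1))
    (hF_mono : ∀ k : ℤ, FF k ≤ FF (k + 1))
    (hG_mono : ∀ k : ℤ, FG k ≤ FG (k + 1))
    (hE_exh : ∀ x : E, ∃ k : ℤ, x ∈ FE k)
    (hF_exh : ∀ x : F, ∃ k : ℤ, x ∈ FF k)
    (hG_exh : ∀ x : G, ∃ k : ℤ, x ∈ FG k)
    (α : E →ₗ[R] F) (β : F →ₗ[R] G)
    (hα : ∀ k : ℤ, (FE k).map α ≤ FF k)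
    (hβ : ∀ k : ℤ, (FF k).map β ≤ FG k)
    (hβα : β ∘ₗ α = 0)
    (hexact : LinearMap.ker β = LinearMap.range α)
    (hα_strict : ∀ k : ℤ, (FE k).map α = LinearMap.range α ⊓ FF k)
    (hβ_strict : ∀ k : ℤ, (FF k).map β = LinearMap.range β ⊓ FG k) :
    ∀ k : ℤ, ∀ f ∈ FF k, β f ∈ FG (k - 1) →
      ∃ e ∈ FE k, f - α e ∈ FF (k - 1) := by
  intro k f hf hβf
  have h1 : β f ∈ (FF (k - 1)).map β := by
    rw [hβ_strict]
    exact ⟨⟨f, rfl⟩, hβf⟩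
  obtain ⟨f', hf', hff'⟩ := h1
  have hker : f - f' ∈ LinearMap.ker β := by
    simp [LinearMap.mem_ker, map_sub, hff']
  have hmem : f - f' ∈ (FE k).map α := by
    rw [hα_strict]
    refine ⟨hexact ▸ hker, ?_⟩
    have : f' ∈ FF k := by
      have := hF_mono (k - 1)
      simpa using this hf'
    exact sub_mem hf this
  obtain ⟨e, he, hαe⟩ := hmem
  exact ⟨e, he, by rwa [hαe, sub_sub_cancel]⟩
end

section
/- Let P be an s × r complex matrix, Q a t × s complex matrix, and let R₁ (r × r), R₂ (s × s), R₃ (t × t) be Hermitian positive-definite complex matrices. Assume that the kernel of the conjugate-transpose map Pᴴ : ℂˢ → ℂʳ is contained in the range of the conjugate-transpose map Qᴴ : ℂᵗ → ℂˢ. Then the Hermitian s × s matrix Ω = P·R₁·Pᴴ + R₂·Qᴴ·R₃·Q·R₂ is positive definite; in particular Ω is invertible. -/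
open Matrix
open scoped ComplexOrder

private lemma quad_form_conj {m n : ℕ} (B : Matrix (Fin m) (Fin n) ℂ)
    (A : Matrix (Fin n) (Fin n) ℂ) (v : Fin m → ℂ) :
    star v ⬝ᵥ (B * A * Bᴴ) *ᵥ v = star (Bᴴ *ᵥ v) ⬝ᵥ A *ᵥ (Bᴴ *ᵥ v) := by
  rw [star_mulVec, conjTranspose_conjTranspose, ← mulVec_mulVec, ← mulVec_mulVec,
    dotProduct_mulVec]

/-- **Symbol-level core of Lemma (DN).**
Let `P` be an `s × r` complex matrix, `Q` a `t × s` complex matrix, and let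
`R₁, R₂, R₃` be Hermitian positive-definite matrices of sizes `r, s, t`.
If `ker Pᴴ ⊆ range Qᴴ` (as maps `ℂˢ → ℂʳ` and `ℂᵗ → ℂˢ`), then the Hermitian
matrix `Ω = P·R₁·Pᴴ + R₂·Qᴴ·R₃·Q·R₂` is positive definite; in particular it is
invertible. -/
theorem hartogs_ext_lemma_DN_symbol
    (r s t : ℕ)
    (P : Matrix (Fin s) (Fin r) ℂ) (Q : Matrix (Fin t) (Fin s) ℂ)
    (R₁ : Matrix (Fin r) (Fin r) ℂ) (R₂ : Matrix (Fin s) (Fin s) ℂ)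
    (R₃ : Matrix (Fin t) (Fin t) ℂ)
    (hR₁ : R₁.PosDef) (hR₂ : R₂.PosDef) (hR₃ : R₃.PosDef)
    (hker : ∀ v : Fin s → ℂ, Pᴴ.mulVec v = 0 → ∃ w : Fin t → ℂ, Qᴴ.mulVec w = v) :
    (P * R₁ * Pᴴ + R₂ * Qᴴ * R₃ * Q * R₂).PosDef ∧
      IsUnit (P * R₁ * Pᴴ + R₂ * Qᴴ * R₃ * Q * R₂) := by
  have hT2eq : R₂ * Qᴴ * R₃ * Q * R₂ = (R₂ * Qᴴ) * R₃ * (R₂ * Qᴴ)ᴴ := by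
    rw [conjTranspose_mul, conjTranspose_conjTranspose, hR₂.1.eq]
    simp [Matrix.mul_assoc]
  have hBH : (R₂ * Qᴴ)ᴴ = Q * R₂ := by
    rw [conjTranspose_mul, conjTranspose_conjTranspose, hR₂.1.eq]
  have hpos : (P * R₁ * Pᴴ + R₂ * Qᴴ * R₃ * Q * R₂).PosDef := by
    rw [posDef_iff_dotProduct_mulVec]
    constructor
    · have h1 : (P * R₁ * Pᴴ).IsHermitian := hR₁.posSemidef.mul_mul_conjTranspose_same P |>.1
      have h2 : (R₂ * Qᴴ * R₃ * Q * R₂).IsHermitian := by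
        rw [hT2eq]
        exact (hR₃.posSemidef.mul_mul_conjTranspose_same (R₂ * Qᴴ)).1
      exact h1.add h2
    · intro v hv
      rw [add_mulVec, dotProduct_add, quad_form_conj, hT2eq, quad_form_conj, hBH]
      set u : Fin r → ℂ := Pᴴ *ᵥ v with hu
      set w : Fin t → ℂ := (Q * R₂) *ᵥ v with hw
      by_cases hu0 : u = 0
      · obtain ⟨w', hw'⟩ := hker v hu0
        have hwne : w ≠ 0 := by
          intro hw0
          have hR2v : star v ⬝ᵥ R₂ *ᵥ v = 0 := by
            calc star v ⬝ᵥ R₂ *ᵥ v = star (Qᴴ *ᵥ w') ⬝ᵥ R₂ *ᵥ v := by rw [hw']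
            _ = star w' ⬝ᵥ (Q * R₂) *ᵥ v := by
                rw [star_mulVec, conjTranspose_conjTranspose, ← dotProduct_mulVec,
                  ← mulVec_mulVec]
            _ = 0 := by rw [← hw, hw0, dotProduct_zero]
          exact absurd hR2v (hR₂.dotProduct_mulVec_pos hv).ne'
        have h1 : star u ⬝ᵥ R₁ *ᵥ u = 0 := by rw [hu0]; simp
        rw [h1, zero_add]
        exact hR₃.dotProduct_mulVec_pos hwne
      · exact add_pos_of_pos_of_nonneg (hR₁.dotProduct_mulVec_pos hu0)
          (hR₃.posSemidef.dotProduct_mulVec_nonneg w)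
  exact ⟨hpos, hpos.isUnit⟩
end

section
/- Let A be a commutative ring and 𝔪 ⊆ A a maximal ideal. Let ⋯ → F₂ → F₁ → F₀ → M → 0 be an exact sequence of A-modules in which every Fᵢ is flat. If the localization M_𝔪 is zero, then the complex obtained by applying − ⊗_A A/𝔪 to the flat part, ⋯ → F₂ ⊗_A A/𝔪 → F₁ ⊗_A A/𝔪 → F₀ ⊗_A A/𝔪 → 0, is exact at every position; in particular F₁ ⊗_A A/𝔪 → F₀ ⊗_A A/𝔪 is surjective. -/
open Module LinearMap TensorProduct

open Module LinearMap Finsupp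

/-- If `L` is flat and `L ⧸ K` is flat, then `K` is flat. -/
private lemma flat_of_flat_quotient {R L : Type} [CommRing R] [AddCommGroup L]
    [Module R L] [Module.Flat R L] (K : Submodule R L) [Module.Flat R (L ⧸ K)] :
    Module.Flat R K := by
  apply Module.Flat.of_forall_isTrivialRelation
  intro ι f x hfx
  have hL : ∑ i, f i • ((x i : L)) = 0 := by
    have := congrArg (K.subtype) hfx
    simpa using this
  obtain ⟨κ, a, y, hy0, ha⟩ := Module.Flat.isTrivialRelation_of_sum_smul_eq_zero hL
  have hy : ∀ i, (x i : L) = ∑ j, a i j • y j := hy0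
  classical
  let fmap : (Fin ι →₀ R) →ₗ[R] (Fin κ →₀ R) :=
    Finsupp.linearCombination R (fun i => ∑ j, Finsupp.single j (a i j))
  let xQ : (Fin κ →₀ R) →ₗ[R] (L ⧸ K) :=
    Finsupp.linearCombination R (fun j => K.mkQ (y j))
  have hxQ : ∀ j, xQ (Finsupp.single j 1) = K.mkQ (y j) := by
    intro j; simp [xQ, Finsupp.linearCombination_single]
  have hcomp : xQ ∘ₗ fmap = 0 := by
    apply Finsupp.lhom_ext'
    intro i
    ext
    simp only [LinearMap.comp_apply, Finsupp.lsingle_apply, LinearMap.zero_apply, fmap,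
      Finsupp.linearCombination_single, one_smul, map_sum, xQ]
    have h1 : (∑ j, a i j • K.mkQ (y j)) = K.mkQ (x i : L) := by
      rw [hy i, map_sum]
      simp
    rw [h1]
    exact (Submodule.Quotient.mk_eq_zero _).mpr (x i).2
  obtain ⟨σ, b, z, hxz, hbf⟩ :=
    Module.Flat.exists_factorization_of_comp_eq_zero_of_free (f := fmap) (x := xQ) hcomp
  -- lift z to L
  have hzl : ∀ s : Fin σ, ∃ l : L, K.mkQ l = z (Finsupp.single s 1) :=
    fun s => Submodule.Quotient.mk_surjective K _
  choose w hw using hzl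
  let zL : (Fin σ →₀ R) →ₗ[R] L := Finsupp.linearCombination R w
  have hzL : K.mkQ ∘ₗ zL = z := by
    apply Finsupp.lhom_ext'
    intro s
    ext
    simp [zL, Finsupp.linearCombination_single, hw s]
  have hyK : ∀ j : Fin κ, y j - zL (b (Finsupp.single j 1)) ∈ K := by
    intro j
    rw [← Submodule.Quotient.mk_eq_zero]
    have h2 : K.mkQ (zL (b (Finsupp.single j 1))) = z (b (Finsupp.single j 1)) := by
      rw [← LinearMap.comp_apply, hzL]
    have h3 : z (b (Finsupp.single j 1)) = K.mkQ (y j) := by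
      rw [← LinearMap.comp_apply, ← hxz, hxQ]
    show K.mkQ _ = 0
    rw [map_sub, h2, h3, sub_self]
  refine ⟨κ, a, fun j => ⟨y j - zL (b (Finsupp.single j 1)), hyK j⟩, ?_, ha⟩
  intro i
  apply Subtype.coe_injective
  simp only [AddSubmonoidClass.coe_finset_sum, SetLike.val_smul]
  have key : b (fmap (Finsupp.single i 1)) = 0 := by
    rw [← LinearMap.comp_apply, hbf]; rfl
  have hf : fmap (Finsupp.single i 1) = ∑ j, Finsupp.single j (a i j) := by
    simp [fmap, Finsupp.linearCombination_single]
  have hsum : zL (b (∑ j, Finsupp.single j (a i j))) = ∑ j, a i j • zL (b (Finsupp.single j 1)) := by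
    rw [map_sum, map_sum]
    refine Finset.sum_congr rfl fun j _ => ?_
    have h4 : Finsupp.single j (a i j) = a i j • Finsupp.single j (1:R) := by
      simp [Finsupp.smul_single]
    rw [h4, map_smul, map_smul]
  simp only [smul_sub]
  rw [Finset.sum_sub_distrib, ← hy i, ← hsum, ← hf, key, map_zero, sub_zero]


open Module LinearMap

private lemma smul_top_inf_le_smul {R L : Type} [CommRing R] [AddCommGroup L] [Module R L]
    (K : Submodule R L) [Module.Flat R (L ⧸ K)] (I : Ideal R) :
    (I • ⊤ : Submodule R L) ⊓ K ≤ I • K := by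
  rintro k ⟨hk1, hk2⟩
  classical
  have htop : (⊤ : Submodule R L) = Submodule.span R (Set.range (id : L → L)) := by
    rw [Set.range_id, Submodule.span_univ]
  rw [htop] at hk1
  obtain ⟨c, hc, hsum⟩ := (Submodule.mem_ideal_smul_span_iff_exists_sum I id k).mp hk1
  have hsum' : ∑ l ∈ c.support.attach, c (l : L) • (l : L) = k := by
    rw [← hsum, Finsupp.sum, Finset.sum_attach c.support (fun l => c l • l)]
    rfl
  -- relation in the quotient
  have hrel : ∑ l ∈ c.support.attach, c (l : L) • K.mkQ (l : L) = 0 := by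
    have : ∑ l ∈ c.support.attach, c (l : L) • K.mkQ (l : L)
        = K.mkQ (∑ l ∈ c.support.attach, c (l : L) • (l : L)) := by
      rw [map_sum]; simp
    rw [this, hsum']
    exact (Submodule.Quotient.mk_eq_zero _).mpr hk2
  obtain ⟨κ, cc, q, hq0, hrel2⟩ := Module.Flat.isTrivialRelation_of_sum_smul_eq_zero hrel
  have hq : ∀ l : c.support, K.mkQ (l : L) = ∑ t, cc l t • q t := hq0
  -- lift q
  have hql : ∀ t : Fin κ, ∃ w : L, K.mkQ w = q t := fun t => Submodule.Quotient.mk_surjective K _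
  choose w hw using hql
  have hmem : ∀ l : c.support, (l : L) - ∑ t, cc l t • w t ∈ K := by
    intro l
    rw [← Submodule.Quotient.mk_eq_zero]
    show K.mkQ _ = 0
    rw [map_sub, map_sum, hq l]
    simp [hw]
  have hrel2' : ∀ j, ∑ i ∈ c.support.attach, c (i : L) * cc i j = 0 := hrel2
  have hk : k = ∑ l ∈ c.support.attach, c (l : L) • ((l : L) - ∑ t, cc l t • w t) := by
    simp only [smul_sub]
    rw [Finset.sum_sub_distrib, hsum']
    have hzero : ∑ l ∈ c.support.attach, c (l : L) • ∑ t, cc l t • w t = 0 := by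
      simp only [Finset.smul_sum, smul_smul]
      rw [Finset.sum_comm]
      refine Finset.sum_eq_zero fun t _ => ?_
      rw [← Finset.sum_smul, hrel2' t, zero_smul]
    rw [hzero, sub_zero]
  rw [hk]
  exact Submodule.sum_mem _ fun l _ => Submodule.smul_mem_smul (hc l) (hmem l)

private lemma mem_smul_top_localized {R G : Type} [CommRing R] [AddCommGroup G] [Module R G]
    (S : Submonoid R) (I : Ideal R) (w : LocalizedModule S G)
    (hw : w ∈ (I • ⊤ : Submodule R (LocalizedModule S G))) :
    ∃ (p : G) (t : S), p ∈ (I • ⊤ : Submodule R G) ∧ w = LocalizedModule.mk p t := by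
  refine Submodule.smul_induction_on hw ?_ ?_
  · intro a ha x _
    induction x using LocalizedModule.induction_on with
    | _ g u =>
      exact ⟨a • g, u, Submodule.smul_mem_smul ha trivial,
        LocalizedModule.smul'_mk a g u⟩
  · rintro x y ⟨p, t, hp, rfl⟩ ⟨p', t', hp', rfl⟩
    refine ⟨t' • p + t • p', t * t', ?_, LocalizedModule.mk_add_mk⟩
    exact Submodule.add_mem _
      (by rw [Submonoid.smul_def]; exact Submodule.smul_mem _ _ hp)
      (by rw [Submonoid.smul_def]; exact Submodule.smul_mem _ _ hp')



/-- **Homological core of Proposition (El).**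
Let `A` be a commutative ring, `𝔪 ⊆ A` a maximal ideal, and
`⋯ → F₂ → F₁ → F₀ → M → 0` an exact sequence of `A`-modules with all `Fᵢ` flat.
If `M_𝔪 = 0`, then the complex obtained by applying `− ⊗_A A/𝔪` to the flat
part is exact at every position; in particular `F₁ ⊗ A/𝔪 → F₀ ⊗ A/𝔪` is
surjective. -/
theorem hartogs_ext_prop_El_core
    (A : Type) [CommRing A] (𝔪 : Ideal A) [𝔪.IsMaximal]
    (M : Type) [AddCommGroup M] [Module A M]
    (F : ℕ → Type) [∀ i, AddCommGroup (F i)] [∀ i, Module A (F i)]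
    [∀ i, Module.Flat A (F i)]
    (d : ∀ i : ℕ, F (i + 1) →ₗ[A] F i) (ε : F 0 →ₗ[A] M)
    (hsurj : Function.Surjective ε)
    (h0 : Function.Exact (d 0) ε)
    (hex : ∀ i : ℕ, Function.Exact (d (i + 1)) (d i))
    (hloc : Subsingleton (LocalizedModule 𝔪.primeCompl M)) :
    Function.Surjective (LinearMap.rTensor (A ⧸ 𝔪) (d 0)) ∧
      ∀ i : ℕ, Function.Exact (LinearMap.rTensor (A ⧸ 𝔪) (d (i + 1)))
        (LinearMap.rTensor (A ⧸ 𝔪) (d i)) := by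
  classical
  set S := 𝔪.primeCompl with hS
  let Li : ℕ → Type := fun i => LocalizedModule S (F i)
  let mkL : ∀ i, F i →ₗ[A] Li i := fun i => LocalizedModule.mkLinearMap S (F i)
  let D : ∀ i, Li (i+1) →ₗ[A] Li i := fun i =>
    IsLocalizedModule.map S (mkL (i+1)) (mkL i) (d i)
  haveI hfl : ∀ i, Module.Flat A (Li i) := fun i =>
    Module.Flat.trans A (Localization S) (LocalizedModule S (F i))
  have hmkD : ∀ i (m : F (i+1)) (s : S),
      D i (LocalizedModule.mk m s) = LocalizedModule.mk (d i m) s :=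
    fun i m s => IsLocalizedModule.map_LocalizedModules S (d i) m s
  have hexD : ∀ i, Function.Exact (D (i+1)) (D i) := fun i =>
    IsLocalizedModule.map_exact S (mkL (i+2)) (mkL (i+1)) (mkL i) (d (i+1)) (d i) (hex i)
  have kerD : ∀ i, LinearMap.ker (D i) = LinearMap.range (D (i+1)) :=
    fun i => LinearMap.exact_iff.mp (hexD i)
  have rangeD0 : LinearMap.range (D 0) = ⊤ := by
    have hD0 : Function.Exact (D 0)
        (IsLocalizedModule.map S (mkL 0) (LocalizedModule.mkLinearMap S M) ε) :=
      IsLocalizedModule.map_exact S (mkL 1) (mkL 0) (LocalizedModule.mkLinearMap S M) (d 0) ε h0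
    rw [eq_top_iff]
    intro y _
    exact (hD0 y).mp (Subsingleton.elim _ _)
  -- flatness of the quotients by the ranges
  have Qflat : ∀ i, Module.Flat A (Li i ⧸ LinearMap.range (D i)) := by
    intro i
    induction i with
    | zero =>
      haveI : Subsingleton (Li 0 ⧸ LinearMap.range (D 0)) :=
        Submodule.Quotient.subsingleton_iff.mpr rangeD0
      infer_instance
    | succ i ih =>
      haveI := ih
      haveI : Module.Flat A (LinearMap.range (D i)) := flat_of_flat_quotient _
      exact Module.Flat.of_linearEquiv
        ((Submodule.quotEquivOfEq _ _ (kerD i).symm) ≪≫ₗ (D i).quotKerEquivRange)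
  -- the key exactness-mod-𝔪 step, at the level of localized modules
  have step : ∀ i (y : Li (i+1)), D i y ∈ (𝔪 • ⊤ : Submodule A (Li i)) →
      ∃ z, y - D (i+1) z ∈ (𝔪 • ⊤ : Submodule A (Li (i+1))) := by
    intro i y hy
    haveI := Qflat i
    have h1 : D i y ∈ 𝔪 • (LinearMap.range (D i)) :=
      smul_top_inf_le_smul (LinearMap.range (D i)) 𝔪 ⟨hy, ⟨y, rfl⟩⟩
    have h2 : ∀ w ∈ 𝔪 • (LinearMap.range (D i)),
        ∃ v ∈ (𝔪 • ⊤ : Submodule A (Li (i+1))), D i v = w := by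
      intro w hw
      refine Submodule.smul_induction_on hw ?_ ?_
      · rintro a ha x ⟨u, rfl⟩
        exact ⟨a • u, Submodule.smul_mem_smul ha trivial, map_smul _ _ _⟩
      · rintro x y ⟨v1, hv1, rfl⟩ ⟨v2, hv2, rfl⟩
        exact ⟨v1 + v2, Submodule.add_mem _ hv1 hv2, map_add _ _ _⟩
    obtain ⟨v, hv, hDv⟩ := h2 _ h1
    have hker : y - v ∈ LinearMap.ker (D i) := by
      rw [LinearMap.mem_ker, map_sub, hDv, sub_self]
    rw [kerD i] at hker
    obtain ⟨z, hz⟩ := hker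
    refine ⟨z, ?_⟩
    rw [hz]
    simpa [sub_sub_cancel] using hv
  -- inverting elements of S modulo 𝔪
  have inv𝔪 : ∀ c : S, ∃ v m₀, m₀ ∈ 𝔪 ∧ v * (c : A) + m₀ = 1 := by
    intro c
    obtain ⟨v, m₀, hm₀, h⟩ := (inferInstance : 𝔪.IsMaximal).exists_inv c.2
    exact ⟨v, m₀, hm₀, h⟩
  -- the key step transferred to the original modules
  have stepF : ∀ i (y : F (i+1)), d i y ∈ (𝔪 • ⊤ : Submodule A (F i)) →
      ∃ z : F (i+2), y - d (i+1) z ∈ (𝔪 • ⊤ : Submodule A (F (i+1))) := by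
    intro i y hy
    have hmk : D i (LocalizedModule.mk y 1) ∈ (𝔪 • ⊤ : Submodule A (Li i)) := by
      rw [hmkD i y 1]
      have h2 : mkL i (d i y) ∈ Submodule.map (mkL i) (𝔪 • ⊤) := Submodule.mem_map_of_mem hy
      rw [Submodule.map_smul''] at h2
      exact SetLike.le_def.mp (smul_mono_right _ le_top) h2
    obtain ⟨z', hz'⟩ := step i (LocalizedModule.mk y 1) hmk
    obtain ⟨z, s, rfl⟩ : ∃ z s, z' = LocalizedModule.mk z s := by
      induction z' using LocalizedModule.induction_on with
      | _ g u => exact ⟨g, u, rfl⟩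
    rw [hmkD (i+1) z s] at hz'
    obtain ⟨p, t, hp, heq⟩ := mem_smul_top_localized S 𝔪 _ hz'
    have heq2 : LocalizedModule.mk y (1:S)
        = LocalizedModule.mk (t • d (i+1) z + s • p) (s * t) := by
      have h3 : LocalizedModule.mk y (1:S)
          = LocalizedModule.mk (d (i+1) z) s + LocalizedModule.mk p t := by
        rw [← heq]; abel
      rw [h3, LocalizedModule.mk_add_mk]
    rw [LocalizedModule.mk_eq] at heq2
    obtain ⟨u, hu⟩ := heq2
    simp only [Submonoid.smul_def, smul_smul, one_smul, one_mul, mul_one, smul_add,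
      Submonoid.coe_mul] at hu
    obtain ⟨v, m₀, hm₀, hvc⟩ := inv𝔪 (u * (s * t))
    have hcoe : ((u * (s * t) : S) : A) = (↑u * (↑s * ↑t) : A) := by push_cast; ring
    refine ⟨((v * (↑u * ↑t) : A)) • z, ?_⟩
    have hy2 : y = d (i+1) ((v * (↑u * ↑t) : A) • z)
        + ((v * (↑u * ↑s) : A) • p + m₀ • y) := by
      calc y = (1:A) • y := (one_smul A y).symm
      _ = ((v * (↑u * (↑s * ↑t)) + m₀ : A)) • y := by rw [← hcoe, hvc]
      _ = v • ((↑u * (↑s * ↑t) : A) • y) + m₀ • y := by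
          rw [add_smul]; congr 1; exact mul_smul v _ y
      _ = v • ((↑u * ↑t : A) • d (i+1) z + (↑u * ↑s : A) • p) + m₀ • y :=
          congrArg (fun w => v • w + m₀ • y) hu
      _ = d (i+1) ((v * (↑u * ↑t) : A) • z) + ((v * (↑u * ↑s) : A) • p + m₀ • y) := by
          rw [smul_add, ← mul_smul, ← mul_smul, map_smul, add_assoc]
    rw [hy2, add_sub_cancel_left]
    exact Submodule.add_mem _ (Submodule.smul_mem _ _ hp)
      (Submodule.smul_mem_smul hm₀ trivial)
  -- surjectivity step at the bottom
  have stepF0 : ∀ x : F 0, ∃ y1 : F 1, x - d 0 y1 ∈ (𝔪 • ⊤ : Submodule A (F 0)) := by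
    intro x
    have hx : LocalizedModule.mk x (1:S) ∈ LinearMap.range (D 0) := by
      rw [rangeD0]; trivial
    obtain ⟨y', hy'⟩ := hx
    obtain ⟨y1, s, rfl⟩ : ∃ a b, y' = LocalizedModule.mk a b := by
      induction y' using LocalizedModule.induction_on with
      | _ g u => exact ⟨g, u, rfl⟩
    rw [hmkD 0 y1 s] at hy'
    rw [LocalizedModule.mk_eq] at hy'
    obtain ⟨u, hu⟩ := hy'
    simp only [Submonoid.smul_def, smul_smul, one_smul, one_mul, mul_one,
      Submonoid.coe_mul] at hu
    obtain ⟨v, m₀, hm₀, hvc⟩ := inv𝔪 (u * s)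
    have hcoe : ((u * s : S) : A) = (↑u * ↑s : A) := by push_cast; ring
    refine ⟨((v * ↑u : A)) • y1, ?_⟩
    have hy2 : x = d 0 ((v * ↑u : A) • y1) + m₀ • x := by
      calc x = (1:A) • x := (one_smul A x).symm
      _ = ((v * (↑u * ↑s) + m₀ : A)) • x := by rw [← hcoe, hvc]
      _ = v • ((↑u * ↑s : A) • x) + m₀ • x := by
          rw [add_smul]; congr 1; exact mul_smul v _ x
      _ = v • ((↑u : A) • d 0 y1) + m₀ • x := congrArg (fun w => v • w + m₀ • x) hu.symm
      _ = d 0 ((v * ↑u : A) • y1) + m₀ • x := by rw [← mul_smul, map_smul]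
    rw [hy2, add_sub_cancel_left]
    exact Submodule.smul_mem_smul hm₀ trivial
  -- now transfer everything through `F i ⊗ A⧸𝔪 ≃ F i ⧸ 𝔪 •⊤`
  have hle : ∀ i, (𝔪 • ⊤ : Submodule A (F (i+1))) ≤ Submodule.comap (d i) (𝔪 • ⊤) := by
    intro i
    rw [← Submodule.map_le_iff_le_comap, Submodule.map_smul'']
    exact smul_mono_right _ le_top
  let dbar : ∀ i, (F (i+1) ⧸ (𝔪 • ⊤ : Submodule A (F (i+1))))
      →ₗ[A] (F i ⧸ (𝔪 • ⊤ : Submodule A (F i))) :=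
    fun i => Submodule.mapQ _ _ (d i) (hle i)
  let e : ∀ i, (F i ⊗[A] (A ⧸ 𝔪)) ≃ₗ[A] (F i ⧸ (𝔪 • ⊤ : Submodule A (F i))) :=
    fun i => TensorProduct.tensorQuotEquivQuotSMul (F i) 𝔪
  have hdbar : ∀ i (x : F (i+1)),
      dbar i (Submodule.Quotient.mk x) = Submodule.Quotient.mk (d i x) :=
    fun i x => by unfold dbar; exact Submodule.mapQ_apply _ _ (d i) x
  have comm : ∀ i, (dbar i) ∘ₗ (e (i+1) : F (i+1) ⊗[A] (A ⧸ 𝔪) →ₗ[A] _)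
      = (e i : F i ⊗[A] (A ⧸ 𝔪) →ₗ[A] _) ∘ₗ LinearMap.rTensor (A ⧸ 𝔪) (d i) := by
    intro i
    apply TensorProduct.ext'
    intro x q
    obtain ⟨r, rfl⟩ := Ideal.Quotient.mk_surjective q
    simp only [LinearMap.comp_apply, LinearEquiv.coe_coe, LinearMap.rTensor_tmul, e,
      TensorProduct.tensorQuotEquivQuotSMul_tmul_mk, hdbar, map_smul]
  have hbar_exact : ∀ i, Function.Exact (dbar (i+1)) (dbar i) := by
    intro i w
    obtain ⟨x, rfl⟩ := Submodule.Quotient.mk_surjective _ w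
    constructor
    · intro h
      rw [hdbar i x, Submodule.Quotient.mk_eq_zero] at h
      obtain ⟨z, hz⟩ := stepF i x h
      refine ⟨Submodule.Quotient.mk z, ?_⟩
      rw [hdbar (i+1) z, Submodule.Quotient.eq]
      have := Submodule.neg_mem _ hz
      rwa [neg_sub] at this
    · rintro ⟨w', hww⟩
      obtain ⟨v, rfl⟩ := Submodule.Quotient.mk_surjective _ w'
      rw [← hww, hdbar (i+1) v, hdbar i, (hex i).apply_apply_eq_zero,
        Submodule.Quotient.mk_eq_zero]
      exact Submodule.zero_mem _
  constructor
  · -- surjectivity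
    have hsurj_bar : Function.Surjective (dbar 0) := by
      intro w
      obtain ⟨x, rfl⟩ := Submodule.Quotient.mk_surjective _ w
      obtain ⟨y1, hy1⟩ := stepF0 x
      refine ⟨Submodule.Quotient.mk y1, ?_⟩
      rw [hdbar 0 y1, Submodule.Quotient.eq]
      have := Submodule.neg_mem _ hy1
      rwa [neg_sub] at this
    intro w
    obtain ⟨q, hq⟩ := hsurj_bar (e 0 w)
    refine ⟨(e 1).symm q, ?_⟩
    apply (e 0).injective
    have hcomm := LinearMap.congr_fun (comm 0) ((e 1).symm q)
    simp only [LinearMap.comp_apply, LinearEquiv.coe_coe] at hcomm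
    rw [← hcomm, LinearEquiv.apply_symm_apply, hq]
  · intro i
    refine Function.Exact.of_ladder_linearEquiv_of_exact
      (e₁ := (e (i+2)).symm) (e₂ := (e (i+1)).symm) (e₃ := (e i).symm)
      ?_ ?_ (hbar_exact i)
    · apply LinearMap.ext
      intro w
      apply (e (i+1)).injective
      have hcomm := LinearMap.congr_fun (comm (i+1)) ((e (i+2)).symm w)
      simp only [LinearMap.comp_apply, LinearEquiv.coe_coe] at hcomm ⊢
      rw [← hcomm, LinearEquiv.apply_symm_apply, LinearEquiv.apply_symm_apply]
    · apply LinearMap.ext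
      intro w
      apply (e i).injective
      have hcomm := LinearMap.congr_fun (comm i) ((e (i+1)).symm w)
      simp only [LinearMap.comp_apply, LinearEquiv.coe_coe] at hcomm ⊢
      rw [← hcomm, LinearEquiv.apply_symm_apply, LinearEquiv.apply_symm_apply]
end
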